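/- arXiv:2308.10466 — 2 statements merged into one kernel-verified Lean document; each statement's English description precedes it below -/
import Mathlib

section
/- For an irreducible Markov chain on a finite state space, the relative number of visits to any state s up to time N, s_N/N, converges with probability 1 to the stationary probability π_s as N → ∞, for any initial distribution. -/
open MeasureTheory ProbabilityTheory Filter Finset


open Finset

section Poisson
variable {S : Type*} [Fintype S] [DecidableEq S]

lemma stoch_pow {P : Matrix S S ℝ} (hnn : ∀ s t, 0 ≤ P s t) (hrow : ∀ s, ∑ t, P s t = 1)
    (k : ℕ) : (∀ s t, 0 ≤ (P ^ k) s t) ∧ (∀ s, ∑ t, (P ^ k) s t = 1) := by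
  induction k with
  | zero =>
    constructor
    · intro s t
      simp [Matrix.one_apply]
      positivity
    · intro s
      simp [Matrix.one_apply]
  | succ n ih =>
    have hmul : ∀ s t, (P ^ (n+1)) s t = ∑ u, (P ^ n) s u * P u t := by
      intro s t; rw [pow_succ, Matrix.mul_apply]
    constructor
    · intro s t
      rw [hmul]
      exact Finset.sum_nonneg fun u _ => mul_nonneg (ih.1 s u) (hnn u t)
    · intro s
      simp_rw [hmul]
      rw [Finset.sum_comm]
      simp_rw [← Finset.mul_sum, hrow]
      simpa using ih.2 s

lemma harmonic_const [Nonempty S] {P : Matrix S S ℝ} (hnn : ∀ s t, 0 ≤ P s t)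
    (hrow : ∀ s, ∑ t, P s t = 1) (hirr : ∀ s t : S, ∃ k : ℕ, 0 < (P ^ k) s t)
    {h : S → ℝ} (hh : P.mulVec h = h) : ∃ c, ∀ x, h x = c := by
  have hpow : ∀ k, (P ^ k).mulVec h = h := by
    intro k
    induction k with
    | zero => simp
    | succ n ih => rw [pow_succ, ← Matrix.mulVec_mulVec, hh, ih]
  obtain ⟨x₀, -, hx₀⟩ := Finset.exists_max_image Finset.univ h ⟨Classical.arbitrary S, Finset.mem_univ _⟩
  refine ⟨h x₀, fun t => ?_⟩
  obtain ⟨k, hk⟩ := hirr x₀ t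
  have h1 : ∑ u, (P ^ k) x₀ u * (h x₀ - h u) = 0 := by
    have := congrFun (hpow k) x₀
    simp only [Matrix.mulVec, dotProduct] at this
    simp_rw [mul_sub, Finset.sum_sub_distrib, ← Finset.sum_mul, (stoch_pow hnn hrow k).2 x₀, this]
    ring
  have h2 : ∀ u ∈ Finset.univ, (0:ℝ) ≤ (P ^ k) x₀ u * (h x₀ - h u) := fun u _ =>
    mul_nonneg ((stoch_pow hnn hrow k).1 x₀ u) (sub_nonneg.2 (hx₀ u (Finset.mem_univ u)))
  have := (Finset.sum_eq_zero_iff_of_nonneg h2).1 h1 t (Finset.mem_univ t)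
  rcases mul_eq_zero.1 this with h | h
  · exact absurd h (ne_of_gt hk)
  · linarith [sub_eq_zero.1 h]

lemma poisson [Nonempty S] {P : Matrix S S ℝ} {π : S → ℝ}
    (hnn : ∀ s t, 0 ≤ P s t) (hrow : ∀ s, ∑ t, P s t = 1)
    (hirr : ∀ s t : S, ∃ k : ℕ, 0 < (P ^ k) s t)
    (hπ_sum : ∑ s, π s = 1) (hπ_stat : ∀ t, ∑ s, π s * P s t = π t) (s : S) :
    ∃ g : S → ℝ, ∀ x, (if x = s then (1:ℝ) else 0) - π s = g x - P.mulVec g x := by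
  classical
  set L : (S → ℝ) →ₗ[ℝ] (S → ℝ) := LinearMap.id - P.mulVecLin with hL
  set ℓ : (S → ℝ) →ₗ[ℝ] ℝ := ∑ x : S, π x • (LinearMap.proj x) with hℓ
  have hℓapp : ∀ v, ℓ v = ∑ x, π x * v x := by
    intro v; simp [hℓ, LinearMap.sum_apply]
  have hone : ℓ (fun _ => (1:ℝ)) = 1 := by rw [hℓapp]; simpa using hπ_sum
  -- ker L is spanned by constants
  have hker : LinearMap.ker L = Submodule.span ℝ {fun _ : S => (1:ℝ)} := by
    apply le_antisymm
    · intro h hh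
      have : P.mulVec h = h := by
        have : L h = 0 := hh
        simp only [hL, LinearMap.sub_apply, LinearMap.id_apply, Matrix.mulVecLin_apply] at this
        have := sub_eq_zero.1 this
        exact this.symm
      obtain ⟨c, hc⟩ := harmonic_const hnn hrow hirr this
      refine Submodule.mem_span_singleton.2 ⟨c, ?_⟩
      funext x; simp [hc x]
    · rw [Submodule.span_singleton_le_iff_mem]
      show L (fun _ => (1:ℝ)) = 0
      simp only [hL, LinearMap.sub_apply, LinearMap.id_apply, Matrix.mulVecLin_apply]
      funext x
      simp [Matrix.mulVec, dotProduct, hrow x]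
  have hkerrank : Module.finrank ℝ (LinearMap.ker L) = 1 := by
    rw [hker]
    rw [finrank_span_singleton]
    intro h
    have := congrFun h (Classical.arbitrary S)
    simpa using this
  -- range L ≤ ker ℓ
  have hle : LinearMap.range L ≤ LinearMap.ker ℓ := by
    rintro - ⟨g, rfl⟩
    simp only [LinearMap.mem_ker]
    rw [hℓapp]
    simp only [hL, LinearMap.sub_apply, LinearMap.id_apply, Matrix.mulVecLin_apply]
    simp only [Pi.sub_apply, mul_sub, Finset.sum_sub_distrib]
    have : ∑ x, π x * P.mulVec g x = ∑ x, π x * g x := by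
      simp only [Matrix.mulVec, dotProduct, Finset.mul_sum]
      rw [Finset.sum_comm]
      refine Finset.sum_congr rfl fun t _ => ?_
      simp_rw [← mul_assoc, ← Finset.sum_mul, hπ_stat t]
    rw [this]; ring
  -- finrank of ker ℓ
  have hℓsurj : LinearMap.range ℓ = ⊤ := by
    rw [LinearMap.range_eq_top]
    intro c
    exact ⟨fun _ => c, by rw [hℓapp]; rw [← Finset.sum_mul, hπ_sum, one_mul]⟩
  have h1 : Module.finrank ℝ (LinearMap.range L) + 1 = Fintype.card S := by
    have := LinearMap.finrank_range_add_finrank_ker L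
    rw [hkerrank, Module.finrank_pi] at this
    exact this
  have h2 : Module.finrank ℝ (LinearMap.ker ℓ) + 1 = Fintype.card S := by
    have := LinearMap.finrank_range_add_finrank_ker ℓ
    rw [hℓsurj, Module.finrank_pi] at this
    rw [add_comm] at this
    have htop : Module.finrank ℝ (⊤ : Submodule ℝ ℝ) = 1 := by
      rw [finrank_top, Module.finrank_self]
    omega
  have heq : LinearMap.range L = LinearMap.ker ℓ :=
    Submodule.eq_of_le_of_finrank_eq hle (by omega)
  -- the target vector is in ker ℓ
  have hv : (fun x => (if x = s then (1:ℝ) else 0) - π s) ∈ LinearMap.ker ℓ := by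
    rw [LinearMap.mem_ker, hℓapp]
    simp only [mul_sub, Finset.sum_sub_distrib, mul_ite, mul_one, mul_zero]
    rw [Finset.sum_ite_eq' Finset.univ s π, ← Finset.sum_mul, hπ_sum, one_mul]
    simp
  rw [← heq] at hv
  obtain ⟨g, hg⟩ := hv
  refine ⟨g, fun x => ?_⟩
  have := congrFun hg x
  simp only [hL, LinearMap.sub_apply, LinearMap.id_apply, Matrix.mulVecLin_apply] at this
  rw [← this]
  simp
end Poisson


open MeasureTheory Filter Finset

section Key
variable {Ω : Type*} [MeasurableSpace Ω] (μ : Measure Ω) [IsProbabilityMeasure μ]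
  {S : Type*} [Fintype S] [DecidableEq S] [MeasurableSpace S] [MeasurableSingletonClass S]
  (P : Matrix S S ℝ)

lemma cyl_meas (z : ℕ → Ω → S) (hz : ∀ k, Measurable (z k)) (k : ℕ) (f : ℕ → S) :
    MeasurableSet {ω | ∀ j ≤ k, z j ω = f j} := by
  have : {ω | ∀ j ≤ k, z j ω = f j} = ⋂ j ∈ Set.Iic k, z j ⁻¹' {f j} := by
    ext ω; simp [Set.mem_iInter]
  rw [this]
  exact MeasurableSet.biInter (Set.to_countable _) fun j _ =>
    (hz j) (measurableSet_singleton _)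

lemma key_zero (hP_row : ∀ s, ∑ t, P s t = 1) (g : S → ℝ)
    (z : ℕ → Ω → S) (hz : ∀ k, Measurable (z k))
    (hMarkov : ∀ (k : ℕ) (f : ℕ → S) (t : S),
      μ {ω | (∀ j ≤ k, z j ω = f j) ∧ z (k + 1) ω = t}
        = ENNReal.ofReal (P (f k) t) * μ {ω | ∀ j ≤ k, z j ω = f j})
    (hP_nn : ∀ s t, 0 ≤ P s t)
    (k : ℕ) (G : (ℕ → S) → ℝ)
    (hG : ∀ p q : ℕ → S, (∀ j ≤ k, p j = q j) → G p = G q) :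
    ∫ ω, G (fun j => z j ω) * (g (z (k+1) ω) - ∑ t, P (z k ω) t * g t) ∂μ = 0 := by
  classical
  -- extension of finite paths
  set ext : (Fin (k+1) → S) → (ℕ → S) := fun p j =>
    if h : j < k + 1 then p ⟨j, h⟩ else p ⟨k, k.lt_succ_self⟩ with hext
  have hextj : ∀ (p : Fin (k+1)) (q : Fin (k+1) → S), ext q p.val = q p := by
    intro p q; simp [hext, p.isLt]; intro h; have := p.isLt; omega
  have hextk : ∀ q : Fin (k+1) → S, ext q k = q ⟨k, k.lt_succ_self⟩ := fun q =>
    hextj ⟨k, k.lt_succ_self⟩ q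
  set E : (Fin (k+1) → S) → S → Set Ω := fun p t =>
    {ω | (∀ j ≤ k, z j ω = ext p j) ∧ z (k + 1) ω = t} with hE
  have hEmeas : ∀ p t, MeasurableSet (E p t) := by
    intro p t
    have : E p t = {ω | ∀ j ≤ k, z j ω = ext p j} ∩ z (k+1) ⁻¹' {t} := by
      ext ω; simp [hE, Set.mem_setOf_eq]
    rw [this]
    exact (cyl_meas z hz k (ext p)).inter ((hz (k+1)) (measurableSet_singleton _))
  set c : (Fin (k+1) → S) → S → ℝ := fun p t =>
    G (ext p) * (g t - ∑ u, P (p ⟨k, k.lt_succ_self⟩) u * g u) with hc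
  -- pointwise decomposition
  have hpt : ∀ ω, G (fun j => z j ω) * (g (z (k+1) ω) - ∑ t, P (z k ω) t * g t)
      = ∑ p : Fin (k+1) → S, ∑ t : S, Set.indicator (E p t) (fun _ => c p t) ω := by
    intro ω
    set p₀ : Fin (k+1) → S := fun i => z i.val ω with hp₀
    have hmem : ω ∈ E p₀ (z (k+1) ω) := by
      constructor
      · intro j hj
        have : (⟨j, Nat.lt_succ_of_le hj⟩ : Fin (k+1)).val = j := rfl
        rw [← this, hextj]
      · rfl
    have hsum1 : ∑ p : Fin (k+1) → S, ∑ t : S, Set.indicator (E p t) (fun _ => c p t) ω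
        = ∑ t : S, Set.indicator (E p₀ t) (fun _ => c p₀ t) ω := by
      refine Finset.sum_eq_single_of_mem p₀ (Finset.mem_univ _) ?_
      intro p _ hp
      apply Finset.sum_eq_zero
      intro t _
      apply Set.indicator_of_notMem
      intro hmem'
      apply hp
      funext i
      have := hmem'.1 i.val (Nat.lt_succ_iff.mp i.isLt)
      rw [hextj] at this
      exact this.symm
    have hsum2 : ∑ t : S, Set.indicator (E p₀ t) (fun _ => c p₀ t) ω = c p₀ (z (k+1) ω) := by
      rw [Finset.sum_eq_single_of_mem (z (k+1) ω) (Finset.mem_univ _)]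
      · exact Set.indicator_of_mem hmem _
      · intro t _ ht
        apply Set.indicator_of_notMem
        intro hmem'
        exact ht hmem'.2.symm
    rw [hsum1, hsum2]
    have h1 : G (ext p₀) = G (fun j => z j ω) := by
      apply hG
      intro j hj
      have : (⟨j, Nat.lt_succ_of_le hj⟩ : Fin (k+1)).val = j := rfl
      rw [← this, hextj]
    have h2 : p₀ ⟨k, k.lt_succ_self⟩ = z k ω := rfl
    rw [hc]
    simp only [h1, h2]
  simp_rw [hpt]
  rw [integral_finset_sum _ (fun p _ => integrable_finset_sum _ (fun t _ =>
    (integrable_const (c p t)).indicator (hEmeas p t)))]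
  have : ∀ p ∈ Finset.univ, ∫ ω, (∑ t : S, Set.indicator (E p t) (fun _ => c p t) ω) ∂μ = 0 := by
    intro p _
    rw [integral_finset_sum _ (fun t _ => (integrable_const (c p t)).indicator (hEmeas p t))]
    have hterm : ∀ t, ∫ ω, Set.indicator (E p t) (fun _ => c p t) ω ∂μ
        = c p t * (P (p ⟨k, k.lt_succ_self⟩) t * (μ {ω | ∀ j ≤ k, z j ω = ext p j}).toReal) := by
      intro t
      rw [integral_indicator_const _ (hEmeas p t)]
      have hμ : μ (E p t) = ENNReal.ofReal (P (ext p k) t) * μ {ω | ∀ j ≤ k, z j ω = ext p j} :=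
        hMarkov k (ext p) t
      rw [hE] at hμ ⊢
      rw [measureReal_def, hμ, ENNReal.toReal_mul, ENNReal.toReal_ofReal (hP_nn _ t), hextk]
      simp only [smul_eq_mul]
      ring
    simp_rw [hterm]
    set m := (μ {ω | ∀ j ≤ k, z j ω = ext p j}).toReal with hm
    set K := ∑ u : S, P (p ⟨k, k.lt_succ_self⟩) u * g u with hK
    have hc2 : ∀ t, c p t * (P (p ⟨k, k.lt_succ_self⟩) t * m)
        = (G (ext p) * m) * (P (p ⟨k, k.lt_succ_self⟩) t * g t - K * P (p ⟨k, k.lt_succ_self⟩) t) := by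
      intro t; rw [hc]; ring
    simp_rw [hc2]
    rw [← Finset.mul_sum, Finset.sum_sub_distrib, ← Finset.mul_sum, hP_row, ← hK]
    simp
  exact Finset.sum_eq_zero this
end Key


open Filter

lemma tendsto_nat_sqrt_atTop : Tendsto Nat.sqrt atTop atTop :=
  tendsto_atTop_atTop.2 fun b => ⟨b * b, fun n hn => Nat.le_sqrt.2 hn⟩

lemma abs_diff_le {u : ℕ → ℝ} {c : ℝ} (hinc : ∀ N, |u (N+1) - u N| ≤ c) :
    ∀ a b : ℕ, a ≤ b → |u b - u a| ≤ c * (b - a : ℝ) := by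
  intro a b hab
  induction b, hab using Nat.le_induction with
  | base => simp
  | succ n hn ih =>
    have h1 : |u (n+1) - u a| ≤ |u (n+1) - u n| + |u n - u a| := by
      have : u (n+1) - u a = (u (n+1) - u n) + (u n - u a) := by ring
      rw [this]; exact abs_add_le _ _
    have h2 : (0:ℝ) ≤ c := le_trans (abs_nonneg _) (hinc 0)
    have h3 : ((n+1 : ℕ) : ℝ) - a = ((n:ℕ) - a) + 1 := by push_cast; ring
    calc |u (n+1) - u a| ≤ c + (c * ((n:ℕ) - (a:ℕ) : ℝ)) :=
          le_trans h1 (add_le_add (hinc n) ih)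
    _ = c * (((n:ℕ) : ℝ) - a + 1) := by ring
    _ = c * (((n+1 : ℕ) : ℝ) - a) := by rw [h3]
  
lemma interp {u : ℕ → ℝ} {c : ℝ} (hinc : ∀ N, |u (N+1) - u N| ≤ c)
    (h : Tendsto (fun m : ℕ => u (m^2) / ((m:ℝ))^2) atTop (nhds 0)) :
    Tendsto (fun N : ℕ => u N / N) atTop (nhds 0) := by
  have hc : (0:ℝ) ≤ c := le_trans (abs_nonneg _) (hinc 0)
  set v : ℕ → ℝ := fun m => |u (m^2)| / ((m:ℝ))^2 + 2*c/(m:ℝ) with hv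
  have hvt : Tendsto v atTop (nhds 0) := by
    have h1 : Tendsto (fun m : ℕ => |u (m^2)| / ((m:ℝ))^2) atTop (nhds 0) := by
      have := h.abs
      simp only [abs_zero] at this
      refine this.congr' ?_
      filter_upwards [eventually_ge_atTop 1] with m hm
      rw [abs_div, abs_of_nonneg (by positivity : (0:ℝ) ≤ ((m:ℝ))^2)]
    have h2 : Tendsto (fun m : ℕ => 2*c/(m:ℝ)) atTop (nhds 0) :=
      tendsto_const_div_atTop_nhds_zero_nat (2*c)
    simpa using h1.add h2
  have hbound : ∀ᶠ N : ℕ in atTop, ‖u N / N‖ ≤ v (Nat.sqrt N) := by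
    filter_upwards [eventually_ge_atTop 1] with N hN
    set r := Nat.sqrt N with hr
    have hr1 : 1 ≤ r := by
      rw [hr]
      exact Nat.one_le_iff_ne_zero.2 (by simp [Nat.sqrt_eq_zero]; omega)
    have hrN : r^2 ≤ N := Nat.sqrt_le' N
    have hNr : N ≤ r^2 + 2*r := by
      have := Nat.lt_succ_sqrt' N
      nlinarith [this]
    have hd : |u N - u (r^2)| ≤ c * ((N:ℝ) - (r^2:ℕ)) := abs_diff_le hinc _ _ hrN
    have hub : |u N| ≤ |u (r^2)| + c * (2*r) := by
      have h1 : |u N| ≤ |u (r^2)| + |u N - u (r^2)| := by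
        have := abs_add_le (u (r^2)) (u N - u (r^2))
        simpa using this
      have h2 : ((N:ℝ) - (r^2:ℕ)) ≤ 2*r := by
        have : (N:ℝ) ≤ (r:ℝ)^2 + 2*r := by exact_mod_cast hNr
        push_cast
        push_cast at this
        linarith
      nlinarith [abs_nonneg (u N - u (r^2)), mul_le_mul_of_nonneg_left h2 hc]
    have hrpos : (0:ℝ) < (r:ℝ)^2 := by positivity
    have hNpos : (0:ℝ) < (N:ℝ) := by exact_mod_cast hN
    rw [Real.norm_eq_abs, abs_div, abs_of_nonneg hNpos.le]
    have step1 : |u N| / (N:ℝ) ≤ (|u (r^2)| + c * (2*r)) / (r:ℝ)^2 := by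
      apply div_le_div₀ (by positivity) hub hrpos
      exact_mod_cast hrN
    calc |u N| / (N:ℝ) ≤ (|u (r^2)| + c * (2*r)) / (r:ℝ)^2 := step1
      _ = |u (r^2)| / (r:ℝ)^2 + c * (2*r) / (r:ℝ)^2 := by rw [add_div]
      _ ≤ |u (r^2)| / (r:ℝ)^2 + 2*c/(r:ℝ) := by
          have : c * (2*(r:ℝ)) / (r:ℝ)^2 = 2*c/(r:ℝ) := by
            field_simp
          rw [this]
      _ = v r := by push_cast [hv]; ring_nf
  exact squeeze_zero_norm' hbound (hvt.comp tendsto_nat_sqrt_atTop)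


/-- For an irreducible Markov chain `(z_k)` on a finite state space with transition
matrix `P` and stationary distribution `π`, the relative number of visits to any state
`s` up to time `N` converges with probability 1 to `π_s`, for any initial distribution. -/
theorem visit_frequency_convergence
    {Ω : Type*} [MeasurableSpace Ω] (μ : Measure Ω) [IsProbabilityMeasure μ]
    {S : Type*} [Fintype S] [DecidableEq S] [MeasurableSpace S]
    [MeasurableSingletonClass S]
    (P : Matrix S S ℝ) (π : S → ℝ)
    (hP_nn : ∀ s t, 0 ≤ P s t) (hP_row : ∀ s, ∑ t, P s t = 1)
    (hirr : ∀ s t : S, ∃ k : ℕ, 0 < (P ^ k) s t)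
    (hπ_nn : ∀ s, 0 ≤ π s) (hπ_sum : ∑ s, π s = 1)
    (hπ_stat : ∀ t, ∑ s, π s * P s t = π t)
    (z : ℕ → Ω → S) (hz_meas : ∀ k, Measurable (z k))
    -- Markov property with transition matrix `P` (any initial distribution):
    (hMarkov : ∀ (k : ℕ) (f : ℕ → S) (t : S),
      μ {ω | (∀ j ≤ k, z j ω = f j) ∧ z (k + 1) ω = t}
        = ENNReal.ofReal (P (f k) t) * μ {ω | ∀ j ≤ k, z j ω = f j}) :
    ∀ s : S, ∀ᵐ ω ∂μ,
      Tendsto (fun N : ℕ =>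
          (((Finset.range N).filter (fun k => z k ω = s)).card : ℝ) / N)
        atTop (nhds (π s)) := by
  intro s
  have hne : Nonempty S := by
    by_contra h
    rw [not_nonempty_iff] at h
    simp at hπ_sum
  obtain ⟨g, hg⟩ := poisson hP_nn hP_row hirr hπ_sum hπ_stat s
  have hg' : ∀ x, (if x = s then (1:ℝ) else 0) - π s = g x - ∑ t, P x t * g t := by
    intro x
    have hmv : P.mulVec g x = ∑ t, P x t * g t := by
      simp [Matrix.mulVec, dotProduct]
    rw [hg x, hmv]
  set D : ℕ → Ω → ℝ := fun k ω => g (z (k+1) ω) - ∑ t, P (z k ω) t * g t with hD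
  set M : ℕ → Ω → ℝ := fun N ω => ∑ k ∈ Finset.range N, D k ω with hM
  obtain ⟨x₁, -, hx₁⟩ := Finset.exists_max_image Finset.univ (fun x => |g x|)
    ⟨Classical.arbitrary S, Finset.mem_univ _⟩
  set C := |g x₁| with hCdef
  have hC0 : 0 ≤ C := abs_nonneg _
  have hgC : ∀ x, |g x| ≤ C := fun x => hx₁ x (Finset.mem_univ x)
  have hPgC : ∀ x, |∑ t, P x t * g t| ≤ C := by
    intro x
    calc |∑ t, P x t * g t| ≤ ∑ t, |P x t * g t| := Finset.abs_sum_le_sum_abs _ _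
      _ ≤ ∑ t, P x t * C := Finset.sum_le_sum fun t _ => by
          rw [abs_mul, abs_of_nonneg (hP_nn x t)]
          exact mul_le_mul_of_nonneg_left (hgC t) (hP_nn x t)
      _ = C := by rw [← Finset.sum_mul, hP_row, one_mul]
  have hDbound : ∀ k ω, |D k ω| ≤ 2*C := by
    intro k ω
    calc |D k ω| ≤ |g (z (k+1) ω)| + |∑ t, P (z k ω) t * g t| := abs_sub _ _
      _ ≤ C + C := add_le_add (hgC _) (hPgC _)
      _ = 2*C := by ring
  have hmeasD : ∀ k, Measurable (D k) := by
    intro k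
    exact ((Measurable.of_discrete (f := g)).comp (hz_meas (k+1))).sub
      ((Measurable.of_discrete (f := fun x => ∑ t, P x t * g t)).comp (hz_meas k))
  have hintD : ∀ k, Integrable (D k) μ := fun k =>
    (integrable_const (2*C)).mono' (hmeasD k).aestronglyMeasurable
      (ae_of_all _ fun ω => by simpa [Real.norm_eq_abs] using hDbound k ω)
  have hintDD : ∀ k l, Integrable (fun ω => D k ω * D l ω) μ := fun k l =>
    (integrable_const ((2*C)*(2*C))).mono' ((hmeasD k).mul (hmeasD l)).aestronglyMeasurable
      (ae_of_all _ fun ω => by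
        rw [Real.norm_eq_abs, abs_mul]
        exact mul_le_mul (hDbound k ω) (hDbound l ω) (abs_nonneg _) (by linarith [hC0]))
  -- orthogonality of martingale differences
  have horth : ∀ k l, k < l → ∫ ω, D k ω * D l ω ∂μ = 0 := by
    intro k l hkl
    have := key_zero μ P hP_row g z hz_meas hMarkov hP_nn l
      (fun p => g (p (k+1)) - ∑ t, P (p k) t * g t)
      (fun p q hpq => by rw [hpq k (le_of_lt hkl), hpq (k+1) hkl])
    exact this
  -- second moment bound
  have hM2 : ∀ N : ℕ, ∫ ω, (M N ω)^2 ∂μ ≤ 4*C^2*N := by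
    intro N
    have hexp : ∀ ω, (M N ω)^2 = ∑ k ∈ Finset.range N, ∑ l ∈ Finset.range N, D k ω * D l ω := by
      intro ω; rw [hM]; rw [pow_two, Finset.sum_mul_sum]
    simp_rw [hexp]
    rw [integral_finset_sum _ (fun k _ => integrable_finset_sum _ (fun l _ => hintDD k l))]
    have hinner : ∀ k ∈ Finset.range N,
        ∫ ω, ∑ l ∈ Finset.range N, D k ω * D l ω ∂μ ≤ 4*C^2 := by
      intro k hk
      rw [integral_finset_sum _ (fun l _ => hintDD k l)]
      rw [Finset.sum_eq_single_of_mem k hk]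
      · calc ∫ ω, D k ω * D k ω ∂μ ≤ ∫ _ω, 4*C^2 ∂μ := by
              apply integral_mono (hintDD k k) (integrable_const _)
              intro ω
              show D k ω * D k ω ≤ 4*C^2
              have h1 := hDbound k ω
              nlinarith [abs_nonneg (D k ω), sq_abs (D k ω)]
          _ = 4*C^2 := by simp
      · intro l _ hlk
        rcases lt_or_gt_of_ne hlk with h | h
        · rw [show (fun ω => D k ω * D l ω) = (fun ω => D l ω * D k ω) from funext fun ω => mul_comm _ _]
          exact horth l k h
        · exact horth k l h
    calc ∑ k ∈ Finset.range N, ∫ ω, ∑ l ∈ Finset.range N, D k ω * D l ω ∂μ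
        ≤ ∑ _k ∈ Finset.range N, 4*C^2 := Finset.sum_le_sum hinner
      _ = 4*C^2*N := by rw [Finset.sum_const, Finset.card_range]; ring
  have hMmeas : ∀ N, Measurable (M N) := fun N =>
    Finset.measurable_sum _ (fun k _ => hmeasD k)
  have hintM2 : ∀ N, Integrable (fun ω => (M N ω)^2) μ := by
    intro N
    refine (integrable_const ((2*C*N)^2)).mono'
      (((hMmeas N).pow_const 2).aestronglyMeasurable) (ae_of_all _ fun ω => ?_)
    have hMb : |M N ω| ≤ 2*C*N := by
      rw [hM]
      calc |∑ k ∈ Finset.range N, D k ω| ≤ ∑ k ∈ Finset.range N, |D k ω| :=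
            Finset.abs_sum_le_sum_abs _ _
        _ ≤ ∑ _k ∈ Finset.range N, 2*C := Finset.sum_le_sum fun k _ => hDbound k ω
        _ = 2*C*N := by rw [Finset.sum_const, Finset.card_range]; ring
    rw [Real.norm_eq_abs, abs_pow]
    have h0 : (0:ℝ) ≤ 2*C*N := by positivity
    calc |M N ω|^2 ≤ (2*C*N)^2 := by nlinarith [abs_nonneg (M N ω)]
      _ = (2*C*N)^2 := rfl
  -- Chebyshev + Borel–Cantelli on the subsequence m ↦ (m+1)^2
  set A : ℕ → ℕ → Set Ω := fun j m =>
    {ω | ((1/((j:ℝ)+1)) * (((m:ℝ)+1))^2)^2 ≤ (M ((m+1)^2) ω)^2} with hA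
  have hcheb : ∀ j m : ℕ, μ (A j m)
      ≤ ENNReal.ofReal ((4*C^2) * ((j:ℝ)+1)^2 / (((m:ℝ)+1)^2)) := by
    intro j m
    set a : ℝ := ((1/((j:ℝ)+1)) * (((m:ℝ)+1))^2)^2 with ha
    have hapos : 0 < a := by positivity
    have h1 : a * (μ (A j m)).toReal ≤ 4*C^2*((m+1)^2 : ℕ) := by
      have := mul_meas_ge_le_integral_of_nonneg
        (ae_of_all μ (fun ω => sq_nonneg (M ((m+1)^2) ω))) (hintM2 ((m+1)^2)) a
      exact le_trans this (hM2 ((m+1)^2))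
    have h2 : (μ (A j m)).toReal ≤ (4*C^2) * ((j:ℝ)+1)^2 / (((m:ℝ)+1)^2) := by
      rw [← le_div_iff₀' hapos] at h1
      refine le_trans h1 (le_of_eq ?_)
      rw [ha]
      push_cast
      rw [div_eq_div_iff (by positivity) (by positivity)]
      field_simp
    calc μ (A j m) = ENNReal.ofReal ((μ (A j m)).toReal) := by
          rw [ENNReal.ofReal_toReal (measure_ne_top μ _)]
      _ ≤ _ := ENNReal.ofReal_le_ofReal h2
  have hBC : ∀ j : ℕ, ∀ᵐ ω ∂μ, ∀ᶠ m in atTop, ω ∉ A j m := by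
    intro j
    apply MeasureTheory.ae_eventually_notMem
    have hsummable : Summable (fun m : ℕ => (4*C^2) * ((j:ℝ)+1)^2 / (((m:ℝ)+1)^2)) := by
      have h1 : Summable (fun m : ℕ => 1 / (((m:ℝ)+1)^2)) := by
        have := (summable_nat_add_iff 1).2 (Real.summable_one_div_nat_pow.2 (by norm_num : 1 < 2))
        refine this.congr fun m => ?_
        push_cast
        ring
      have := h1.mul_left ((4*C^2) * ((j:ℝ)+1)^2)
      refine this.congr fun m => ?_
      field_simp
    have hnn : ∀ m : ℕ, (0:ℝ) ≤ (4*C^2) * ((j:ℝ)+1)^2 / (((m:ℝ)+1)^2) := fun m => by positivity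
    refine ne_top_of_le_ne_top ?_ (ENNReal.tsum_le_tsum (fun m => hcheb j m))
    rw [← ENNReal.ofReal_tsum_of_nonneg hnn hsummable]
    exact ENNReal.ofReal_ne_top
  have hae : ∀ᵐ ω ∂μ, ∀ j : ℕ, ∀ᶠ m in atTop, ω ∉ A j m := (MeasureTheory.ae_all_iff).2 hBC
  filter_upwards [hae] with ω hω
  -- subsequence convergence
  have hsub : Tendsto (fun m : ℕ => M (m^2) ω / ((m:ℝ))^2) atTop (nhds 0) := by
    rw [NormedAddCommGroup.tendsto_nhds_zero]
    intro ε hε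
    obtain ⟨j, hj⟩ := exists_nat_one_div_lt hε
    obtain ⟨a, ha⟩ := (eventually_atTop).1 (hω j)
    rw [eventually_atTop]
    refine ⟨a + 1, fun m hm => ?_⟩
    obtain ⟨m', rfl⟩ : ∃ m', m = m' + 1 := ⟨m - 1, by omega⟩
    have hnotA := ha m' (by omega)
    rw [hA, Set.mem_setOf_eq, not_le] at hnotA
    have hb : (0:ℝ) < (1/((j:ℝ)+1)) * (((m':ℝ)+1))^2 := by positivity
    have habs : |M ((m'+1)^2) ω| < (1/((j:ℝ)+1)) * (((m':ℝ)+1))^2 := by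
      nlinarith [abs_nonneg (M ((m'+1)^2) ω), sq_abs (M ((m'+1)^2) ω)]
    rw [Real.norm_eq_abs, abs_div, abs_of_nonneg (by positivity : (0:ℝ) ≤ (((m'+1:ℕ):ℝ))^2)]
    rw [div_lt_iff₀ (by positivity)]
    have hcast : (((m'+1:ℕ):ℝ))^2 = (((m':ℝ)+1))^2 := by push_cast; ring
    rw [hcast]
    calc |M ((m'+1)^2) ω| < (1/((j:ℝ)+1)) * (((m':ℝ)+1))^2 := habs
      _ ≤ ε * (((m':ℝ)+1))^2 :=
          mul_le_mul_of_nonneg_right (le_of_lt hj) (by positivity)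
  -- full sequence convergence of M N / N
  have hMten : Tendsto (fun N : ℕ => M N ω / N) atTop (nhds 0) := by
    refine interp (u := fun N => M N ω) (c := 2*C) (fun N => ?_) hsub
    have : M (N+1) ω - M N ω = D N ω := by
      show (∑ k ∈ Finset.range (N+1), D k ω) - ∑ k ∈ Finset.range N, D k ω = D N ω
      rw [Finset.sum_range_succ]; ring
    rw [this]
    exact hDbound N ω
  -- identity and conclusion
  have h1 : Tendsto (fun N : ℕ => (g (z 0 ω) - g (z N ω))/N) atTop (nhds 0) := by
    refine squeeze_zero_norm' (a := fun N : ℕ => 2*C/(N:ℝ)) ?_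
      (tendsto_const_div_atTop_nhds_zero_nat (2*C))
    filter_upwards [eventually_ge_atTop 1] with N hN
    have hNpos : (0:ℝ) < N := by exact_mod_cast hN
    rw [Real.norm_eq_abs, abs_div, abs_of_nonneg hNpos.le]
    have hnum : |g (z 0 ω) - g (z N ω)| ≤ 2*C := by
      calc |g (z 0 ω) - g (z N ω)| ≤ |g (z 0 ω)| + |g (z N ω)| := abs_sub _ _
        _ ≤ C + C := add_le_add (hgC _) (hgC _)
        _ = 2*C := by ring
    gcongr
  have hlim : Tendsto (fun N : ℕ => π s + ((g (z 0 ω) - g (z N ω))/N + M N ω / N))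
      atTop (nhds (π s)) := by
    have := tendsto_const_nhds (x := π s) (f := atTop (α := ℕ)) |>.add (h1.add hMten)
    simpa using this
  apply hlim.congr'
  filter_upwards [eventually_ge_atTop 1] with N hN
  have hNpos : (0:ℝ) < N := by exact_mod_cast hN
  -- the counting identity
  have hcard : (((Finset.range N).filter (fun k => z k ω = s)).card : ℝ)
      = ∑ k ∈ Finset.range N, (if z k ω = s then (1:ℝ) else 0) := by
    rw [Finset.card_filter, Nat.cast_sum]
    exact Finset.sum_congr rfl fun k _ => by split <;> simp
  have htel : ∑ k ∈ Finset.range N, (g (z k ω) - ∑ t, P (z k ω) t * g t)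
      = g (z 0 ω) - g (z N ω) + M N ω := by
    have h1 : ∀ k, g (z k ω) - ∑ t, P (z k ω) t * g t
        = (g (z k ω) - g (z (k+1) ω)) + D k ω := by intro k; rw [hD]; ring
    simp_rw [h1]
    rw [Finset.sum_add_distrib, Finset.sum_range_sub' (fun k => g (z k ω)), hM]
  have hsum : ∑ k ∈ Finset.range N, ((if z k ω = s then (1:ℝ) else 0) - π s)
      = g (z 0 ω) - g (z N ω) + M N ω := by
    calc ∑ k ∈ Finset.range N, ((if z k ω = s then (1:ℝ) else 0) - π s)
        = ∑ k ∈ Finset.range N, (g (z k ω) - ∑ t, P (z k ω) t * g t) :=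
          Finset.sum_congr rfl fun k _ => hg' (z k ω)
      _ = _ := htel
  have hkey : ∑ k ∈ Finset.range N, (if z k ω = s then (1:ℝ) else 0)
      = N * π s + (g (z 0 ω) - g (z N ω) + M N ω) := by
    rw [Finset.sum_sub_distrib, Finset.sum_const, Finset.card_range] at hsum
    have : ∑ k ∈ Finset.range N, (if z k ω = s then (1:ℝ) else 0) - N * π s
        = g (z 0 ω) - g (z N ω) + M N ω := by
      rw [← hsum]; ring_nf
    linarith
  rw [hcard, hkey]
  field_simp
end

section
/- Under the control policy with enforced pumping, if n_p ≥ m − 1 and ζ ≥ m − 1 then the tank volume stays nonnegative: if x_k ≥ 0, demands satisfy d_k ≤ (m−1)d, and pumping (u_k = ζd) occurs whenever x_k ≤ n_p·Δx, then x_{k+1} ≥ 0. -/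
/-- Under the control policy with enforced pumping, if `n_p ≥ m−1` and `ζ ≥ m−1`, then
the tank volume stays nonnegative: if `x_k ≥ 0`, the demand satisfies
`0 ≤ d_k ≤ (m−1)d`, and pumping (`u_k = ζd`) occurs whenever `x_k ≤ n_p Δx`,
then `x_{k+1} ≥ 0`. -/
theorem tank_stays_nonneg (d Δt : ℝ) (hd : 0 < d) (hΔt : 0 < Δt)
    (m np ζ : ℕ) (hm : 1 ≤ m) (hnp : m - 1 ≤ np) (hζ : m - 1 ≤ ζ)
    (k : ℕ) (x u dem : ℕ → ℝ)
    (hdyn : x (k + 1) = x k + Δt * (u k - dem k))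
    (hu : u k = 0 ∨ u k = (ζ : ℝ) * d)
    (hforce : x k ≤ (np : ℝ) * (d * Δt) → u k = (ζ : ℝ) * d)
    (hdem_nn : 0 ≤ dem k) (hdem_ub : dem k ≤ ((m : ℝ) - 1) * d)
    (hxk : 0 ≤ x k) :
    0 ≤ x (k + 1) := by
  have hζR : ((m : ℝ) - 1) ≤ (ζ : ℝ) := by
    have := (Nat.cast_le (α := ℝ)).mpr hζ
    push_cast [Nat.cast_sub hm] at this ⊢
    linarith
  have hnpR : ((m : ℝ) - 1) ≤ (np : ℝ) := by
    have := (Nat.cast_le (α := ℝ)).mpr hnp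
    push_cast [Nat.cast_sub hm] at this ⊢
    linarith
  rcases le_or_gt (x k) ((np : ℝ) * (d * Δt)) with h | h
  · have hu' := hforce h
    rw [hdyn, hu']
    have : dem k ≤ (ζ : ℝ) * d := le_trans hdem_ub (by nlinarith)
    nlinarith
  · have hun : 0 ≤ u k := by
      rcases hu with h' | h' <;> rw [h'] <;> positivity
    have hdemΔ : dem k * Δt ≤ x k := by
      have h1 : dem k * Δt ≤ ((m : ℝ) - 1) * d * Δt := by nlinarith
      have h2 : ((m : ℝ) - 1) * d * Δt ≤ (np : ℝ) * (d * Δt) := by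
        have := mul_le_mul_of_nonneg_right hnpR (le_of_lt (mul_pos hd hΔt))
        linarith [this]
      linarith
    rw [hdyn]
    nlinarith
end
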